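/- arXiv:2507.06027 — 3 statements merged into one kernel-verified Lean document; each statement's English description precedes it below -/
import Mathlib

section
/- Assume φ is bounded on [ε̄, 1−ε̄] and that liminf_{x→0⁺} (1/x)∫₀^x φ(τ) dτ < +∞. Then for every sequence ε_n ∈ (0,ε̄) with ε_n → 0 one has inf_{x∈(0,1)} (1/x)∫₀^x φ(τ) dτ = lim_{n→∞} inf_{x∈(0,1)} (1/x)∫₀^x φ_{ε_n}(τ) dτ. -/
open Filter Set MeasureTheory Topology

lemma ereal_iInf_le_iInf_add {f g : ℝ → EReal} {s : Set ℝ} {c : ℝ}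
    (h : ∀ x ∈ s, f x ≤ g x + (c : EReal)) :
    (⨅ x ∈ s, f x) ≤ (⨅ x ∈ s, g x) + (c : EReal) := by
  rw [← EReal.sub_le_iff_le_add (Or.inl (EReal.coe_ne_bot c)) (Or.inl (EReal.coe_ne_top c))]
  refine le_iInf₂ fun x hx => ?_
  rw [EReal.sub_le_iff_le_add (Or.inl (EReal.coe_ne_bot c)) (Or.inl (EReal.coe_ne_top c))]
  exact (iInf₂_le x hx).trans (h x hx)

theorem statement11
    (φ : ℝ → ℝ) (A : Finset ℝ) (hA : (A : Set ℝ) ⊆ Set.Ioo 0 1)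
    (hφint : MeasureTheory.IntegrableOn φ (Set.Ioo 0 1))
    (hφcont : ∀ x ∈ Set.Ioo (0:ℝ) 1, x ∉ A → ContinuousWithinAt φ (Set.Ioo 0 1) x)
    (εbar : ℝ)
    (hεbar : εbar = sInf {t : ℝ | ∃ a ∈ (A : Set ℝ) ∪ {0, 1}, ∃ b ∈ (A : Set ℝ) ∪ {0, 1},
      a < b ∧ t = b - a} / 2)
    (φε : ℝ → ℝ → ℝ)
    (hφεA : ∀ ε ∈ Set.Ico (0:ℝ) εbar, ∀ a ∈ A, ∀ x ∈ Set.Icc (a - ε) (a + ε),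
      φε ε x = φ (a - ε) + (φ (a + ε) - φ (a - ε)) / (2 * ε) * (x - (a - ε)))
    (hφεB : ∀ ε ∈ Set.Ico (0:ℝ) εbar, ∀ x : ℝ,
      (∀ a ∈ A, x ∉ Set.Icc (a - ε) (a + ε)) → φε ε x = φ x)
    (hφbdd : ∃ M, ∀ x ∈ Set.Icc εbar (1 - εbar), |φ x| ≤ M)
    (hliminf : Filter.liminf (fun x : ℝ => (((1 / x) * ∫ τ in (0:ℝ)..x, φ τ : ℝ) : EReal))
      (nhdsWithin 0 (Set.Ioi 0)) < ⊤)
    (εn : ℕ → ℝ) (hεn : ∀ n, εn n ∈ Set.Ioo (0:ℝ) εbar)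
    (hε : Filter.Tendsto εn Filter.atTop (nhds 0)) :
    Filter.Tendsto
      (fun n => ⨅ x ∈ Set.Ioo (0:ℝ) 1, (((1 / x) * ∫ τ in (0:ℝ)..x, φε (εn n) τ : ℝ) : EReal))
      Filter.atTop
      (nhds (⨅ x ∈ Set.Ioo (0:ℝ) 1, (((1 / x) * ∫ τ in (0:ℝ)..x, φ τ : ℝ) : EReal))) := by
  obtain ⟨M, hM⟩ := hφbdd
  have hεb : 0 < εbar := lt_trans (hεn 0).1 (hεn 0).2
  -- gap facts
  set S₀ : Set ℝ := {t : ℝ | ∃ a ∈ (A : Set ℝ) ∪ {0, 1}, ∃ b ∈ (A : Set ℝ) ∪ {0, 1},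
      a < b ∧ t = b - a} with hS₀
  have hbdd : BddBelow S₀ := ⟨0, by rintro t ⟨a, _, b, _, hab, rfl⟩; linarith⟩
  have h01 : (0:ℝ) ∈ (A : Set ℝ) ∪ {0, 1} := Or.inr (by simp)
  have h11 : (1:ℝ) ∈ (A : Set ℝ) ∪ {0, 1} := Or.inr (by simp)
  have h2εb1 : 2 * εbar ≤ 1 := by
    have : sInf S₀ ≤ 1 := csInf_le hbdd ⟨0, h01, 1, h11, by norm_num, by norm_num⟩
    linarith [this, hεbar]
  have hgap : ∀ a ∈ A, 2 * εbar ≤ a ∧ a ≤ 1 - 2 * εbar := by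
    intro a ha
    have haI : a ∈ Set.Ioo (0:ℝ) 1 := hA (Finset.mem_coe.2 ha)
    have haU : a ∈ (A : Set ℝ) ∪ {0, 1} := Or.inl (Finset.mem_coe.2 ha)
    have h1 : sInf S₀ ≤ a := csInf_le hbdd ⟨0, h01, a, haU, haI.1, by ring⟩
    have h2 : sInf S₀ ≤ 1 - a := csInf_le hbdd ⟨a, haU, 1, h11, haI.2, rfl⟩
    exact ⟨by linarith [h1, hεbar], by linarith [h2, hεbar]⟩
  have hM0 : 0 ≤ M :=
    le_trans (abs_nonneg _) (hM εbar ⟨le_refl _, by linarith⟩)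
  set K : ℝ := 4 * M * A.card / εbar with hK
  have hK0 : 0 ≤ K := by positivity
  -- the key uniform estimate
  have key : ∀ n, ∀ x ∈ Set.Ioo (0:ℝ) 1,
      |(1 / x * ∫ τ in (0:ℝ)..x, φε (εn n) τ) - (1 / x * ∫ τ in (0:ℝ)..x, φ τ)| ≤ K * εn n := by
    intro n x hx
    obtain ⟨hε0, hεε⟩ := hεn n
    set ε := εn n with hεdef
    have hcK : 0 ≤ K * ε := mul_nonneg hK0 hε0.le
    have hεmem : ε ∈ Set.Ico (0:ℝ) εbar := ⟨hε0.le, hεε⟩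
    have hIcc_sub : ∀ a ∈ A, Set.Icc (a - ε) (a + ε) ⊆ Set.Icc εbar (1 - εbar) := by
      intro a ha y hy
      obtain ⟨hg1, hg2⟩ := hgap a ha
      exact ⟨by linarith [hy.1], by linarith [hy.2]⟩
    set S : Set ℝ := ⋃ a ∈ A, Set.Icc (a - ε) (a + ε) with hSdef
    have hSmeas : MeasurableSet S :=
      A.measurableSet_biUnion (fun a _ => measurableSet_Icc)
    have hSsub : S ⊆ Set.Icc εbar (1 - εbar) := by
      intro y hy
      obtain ⟨a, ha, hya⟩ := Set.mem_iUnion₂.1 hy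
      exact hIcc_sub a ha hya
    have hout : ∀ y : ℝ, y ∉ S → φε ε y = φ y := by
      intro y hy
      exact hφεB ε hεmem y (fun a ha hmem => hy (Set.mem_iUnion₂.2 ⟨a, ha, hmem⟩))
    have hφεbd : ∀ y ∈ S, |φε ε y| ≤ M := by
      intro y hyS
      obtain ⟨a, ha, hy⟩ := Set.mem_iUnion₂.1 hyS
      rw [hφεA ε hεmem a ha y hy]
      have hu : |φ (a - ε)| ≤ M := hM _ (hIcc_sub a ha ⟨le_refl _, by linarith⟩)
      have hv : |φ (a + ε)| ≤ M := hM _ (hIcc_sub a ha ⟨by linarith, le_refl _⟩)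
      have h2ε : (0:ℝ) < 2 * ε := by linarith
      set t := (y - (a - ε)) / (2 * ε) with htdef
      have ht0 : 0 ≤ t := div_nonneg (by linarith [hy.1]) h2ε.le
      have ht1 : t ≤ 1 := by
        rw [htdef, div_le_one h2ε]
        linarith [hy.2]
      have heq : φ (a - ε) + (φ (a + ε) - φ (a - ε)) / (2 * ε) * (y - (a - ε))
          = (1 - t) * φ (a - ε) + t * φ (a + ε) := by
        rw [htdef]; field_simp; ring
      rw [heq, abs_le]
      obtain ⟨hu1, hu2⟩ := abs_le.1 hu
      obtain ⟨hv1, hv2⟩ := abs_le.1 hv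
      constructor <;> nlinarith
    -- integrability of φε ε on Ioo 0 1
    have hintS : IntegrableOn (φε ε) S := by
      rw [hSdef, integrableOn_finset_iUnion]
      intro a ha
      have hc : Continuous (fun y : ℝ =>
          φ (a - ε) + (φ (a + ε) - φ (a - ε)) / (2 * ε) * (y - (a - ε))) := by fun_prop
      exact hc.integrableOn_Icc.congr_fun
        (fun y hy => (hφεA ε hεmem a ha y hy).symm) measurableSet_Icc
    have hintD : IntegrableOn (φε ε) (Set.Ioo 0 1 \ S) :=
      (hφint.mono_set diff_subset).congr_fun (fun y hy => (hout y hy.2).symm)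
        (measurableSet_Ioo.diff hSmeas)
    have hint : IntegrableOn (φε ε) (Set.Ioo 0 1) := by
      refine (hintD.union hintS).mono_set ?_
      intro y hy
      by_cases h : y ∈ S
      · exact Or.inr h
      · exact Or.inl ⟨hy, h⟩
    have hIocsub : Set.Ioc (0:ℝ) x ⊆ Set.Ioo 0 1 :=
      fun y hy => ⟨hy.1, lt_of_le_of_lt hy.2 hx.2⟩
    have hint1 : IntegrableOn (φε ε) (Set.Ioc 0 x) := hint.mono_set hIocsub
    have hint2 : IntegrableOn φ (Set.Ioc 0 x) := hφint.mono_set hIocsub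
    rw [intervalIntegral.integral_of_le hx.1.le, intervalIntegral.integral_of_le hx.1.le]
    rcases le_or_gt x εbar with hxε | hxε
    · -- the two integrals coincide
      have : ∫ τ in Set.Ioc 0 x, φε ε τ = ∫ τ in Set.Ioc 0 x, φ τ := by
        refine setIntegral_congr_fun measurableSet_Ioc (fun y hy => ?_)
        refine hout y (fun hyS => ?_)
        obtain ⟨a, ha, hya⟩ := Set.mem_iUnion₂.1 hyS
        have hga := (hgap a ha).1
        have hyx : y ≤ εbar := le_trans hy.2 hxε
        linarith [hya.1]
      rw [this, sub_self, abs_zero]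
      exact hcK
    · -- x > εbar : bound the difference
      have hdiff : IntegrableOn (fun y => φε ε y - φ y) (Set.Ioc 0 x) := hint1.sub hint2
      have hsub : (∫ τ in Set.Ioc 0 x, φε ε τ) - ∫ τ in Set.Ioc 0 x, φ τ
          = ∫ τ in Set.Ioc 0 x, (φε ε τ - φ τ) := (integral_sub hint1 hint2).symm
      have hsplit : (∫ τ in Set.Ioc 0 x ∩ S, (φε ε τ - φ τ))
            + ∫ τ in Set.Ioc 0 x \ S, (φε ε τ - φ τ)
          = ∫ τ in Set.Ioc 0 x, (φε ε τ - φ τ) :=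
        integral_inter_add_diff hSmeas hdiff
      have hzero : (∫ τ in Set.Ioc 0 x \ S, (φε ε τ - φ τ)) = 0 := by
        rw [setIntegral_congr_fun (measurableSet_Ioc.diff hSmeas)
          (g := fun _ => (0:ℝ)) (fun y hy => by rw [hout y hy.2, sub_self])]
        exact integral_zero _ _
      -- measure bound
      have hmeasS : volume (Set.Ioc 0 x ∩ S) ≤ (A.card : ENNReal) * ENNReal.ofReal (2 * ε) := by
        refine le_trans (measure_mono Set.inter_subset_right) ?_
        refine le_trans (measure_biUnion_finset_le A _) ?_
        have : ∀ a ∈ A, volume (Set.Icc (a - ε) (a + ε)) = ENNReal.ofReal (2 * ε) := by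
          intro a ha
          rw [Real.volume_Icc]
          norm_num
          ring_nf
          rw [ENNReal.ofReal_mul' (by norm_num : (0:ℝ) ≤ 2)]
          simp
        rw [Finset.sum_congr rfl this, Finset.sum_const, nsmul_eq_mul]
      have htoReal : (volume (Set.Ioc 0 x ∩ S)).toReal ≤ (A.card : ℝ) * (2 * ε) := by
        have hne : ((A.card : ENNReal) * ENNReal.ofReal (2 * ε)) ≠ ⊤ :=
          ENNReal.mul_ne_top (ENNReal.natCast_ne_top _) ENNReal.ofReal_ne_top
        refine le_trans (ENNReal.toReal_mono hne hmeasS) ?_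
        rw [ENNReal.toReal_mul, ENNReal.toReal_ofReal (by linarith : (0:ℝ) ≤ 2 * ε)]
        simp
      have hbd : |∫ τ in Set.Ioc 0 x ∩ S, (φε ε τ - φ τ)| ≤ 2 * M * ((A.card : ℝ) * (2 * ε)) := by
        have h1 : ‖∫ τ in Set.Ioc 0 x ∩ S, (φε ε τ - φ τ)‖
            ≤ (2 * M) * (volume (Set.Ioc 0 x ∩ S)).toReal := by
          refine norm_setIntegral_le_of_norm_le_const ?_ ?_
          · exact lt_of_le_of_lt (measure_mono Set.inter_subset_left)
              (by simp [Real.volume_Ioc])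
          · intro y hy
            have hyS := hy.2
            have h1 := hφεbd y hyS
            have h2 : |φ y| ≤ M := hM y (hSsub hyS)
            calc ‖φε ε y - φ y‖ ≤ |φε ε y| + |φ y| := abs_sub _ _
              _ ≤ 2 * M := by linarith
        rw [Real.norm_eq_abs] at h1
        exact le_trans h1 (mul_le_mul_of_nonneg_left htoReal (by linarith))
      -- put everything together
      have hxpos : (0:ℝ) < x := hx.1
      have h1x : 1 / x ≤ 1 / εbar := one_div_le_one_div_of_le hεb hxε.le
      have h1x0 : 0 ≤ 1 / x := by positivity
      calc |1 / x * (∫ τ in Set.Ioc 0 x, φε ε τ) - 1 / x * ∫ τ in Set.Ioc 0 x, φ τ|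
          = (1 / x) * |∫ τ in Set.Ioc 0 x, (φε ε τ - φ τ)| := by
            rw [← mul_sub, abs_mul, abs_of_nonneg h1x0, hsub]
        _ = (1 / x) * |∫ τ in Set.Ioc 0 x ∩ S, (φε ε τ - φ τ)| := by
            rw [← hsplit, hzero, add_zero]
        _ ≤ (1 / εbar) * (2 * M * ((A.card : ℝ) * (2 * ε))) := by
            refine mul_le_mul h1x hbd (abs_nonneg _) (by positivity)
        _ = K * ε := by rw [hK]; field_simp; ring
  -- translate to EReal inequalities between the infima
  have upper : ∀ n, (⨅ x ∈ Set.Ioo (0:ℝ) 1, (((1 / x) * ∫ τ in (0:ℝ)..x, φε (εn n) τ : ℝ) : EReal))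
      ≤ (⨅ x ∈ Set.Ioo (0:ℝ) 1, (((1 / x) * ∫ τ in (0:ℝ)..x, φ τ : ℝ) : EReal))
        + ((K * εn n : ℝ) : EReal) := by
    intro n
    refine ereal_iInf_le_iInf_add fun x hx => ?_
    rw [← EReal.coe_add]
    refine EReal.coe_le_coe_iff.2 ?_
    have h := abs_le.1 (key n x hx)
    linarith [h.1, h.2]
  have lower : ∀ n, (⨅ x ∈ Set.Ioo (0:ℝ) 1, (((1 / x) * ∫ τ in (0:ℝ)..x, φ τ : ℝ) : EReal))
      ≤ (⨅ x ∈ Set.Ioo (0:ℝ) 1, (((1 / x) * ∫ τ in (0:ℝ)..x, φε (εn n) τ : ℝ) : EReal))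
        + ((K * εn n : ℝ) : EReal) := by
    intro n
    refine ereal_iInf_le_iInf_add fun x hx => ?_
    rw [← EReal.coe_add]
    refine EReal.coe_le_coe_iff.2 ?_
    have h := abs_le.1 (key n x hx)
    linarith [h.1, h.2]
  set I : EReal := ⨅ x ∈ Set.Ioo (0:ℝ) 1, (((1 / x) * ∫ τ in (0:ℝ)..x, φ τ : ℝ) : EReal)
    with hIdef
  have hItop : I ≠ ⊤ := by
    have hhalf : I ≤ (((1 / (1/2 : ℝ)) * ∫ τ in (0:ℝ)..(1/2 : ℝ), φ τ : ℝ) : EReal) :=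
      iInf₂_le (1/2 : ℝ) (by norm_num)
    intro h
    rw [h, top_le_iff] at hhalf
    exact EReal.coe_ne_top _ hhalf
  by_cases hbot : I = ⊥
  · have hforall : ∀ n,
        (⨅ x ∈ Set.Ioo (0:ℝ) 1, (((1 / x) * ∫ τ in (0:ℝ)..x, φε (εn n) τ : ℝ) : EReal)) = ⊥ := by
      intro n
      have h := upper n
      rw [hbot, EReal.bot_add] at h
      exact le_bot_iff.1 h
    rw [hbot]
    exact Filter.Tendsto.congr (fun n => (hforall n).symm) tendsto_const_nhds
  · obtain ⟨r, hr⟩ : ∃ r : ℝ, I = (r : EReal) := ⟨I.toReal, (EReal.coe_toReal hItop hbot).symm⟩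
    rw [hr]
    have hcseq : Tendsto (fun n => K * εn n) atTop (𝓝 0) := by simpa using hε.const_mul K
    refine tendsto_of_tendsto_of_tendsto_of_le_of_le
      (g := fun n => ((r - K * εn n : ℝ) : EReal)) (h := fun n => ((r + K * εn n : ℝ) : EReal))
      (EReal.tendsto_coe.2 (by simpa using tendsto_const_nhds.sub hcseq))
      (EReal.tendsto_coe.2 (by simpa using tendsto_const_nhds.add hcseq))
      (fun n => ?_) (fun n => ?_)
    · have h := lower n
      rw [hr] at h
      dsimp only
      rw [EReal.coe_sub]
      exact (EReal.sub_le_iff_le_add (Or.inl (EReal.coe_ne_bot _))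
        (Or.inl (EReal.coe_ne_top _))).2 h
    · have h := upper n
      rw [hr] at h
      dsimp only
      rw [EReal.coe_add]
      exact h
end

section
/- Assume φ is bounded on [ε̄, 1−ε̄] and that limsup_{x→0⁺} (1/x)∫₀^x φ(τ) dτ < +∞. Then for every sequence ε_n ∈ (0,ε̄) with ε_n → 0 one has sup_{x∈(0,1)} (1/x)∫₀^x φ(τ) dτ = lim_{n→∞} sup_{x∈(0,1)} (1/x)∫₀^x φ_{ε_n}(τ) dτ. -/
open Filter Set MeasureTheory Topology


lemma aux_ereal_sup_tendsto (F : ℝ → ℝ) (Fn : ℕ → ℝ → ℝ) (d : ℕ → ℝ)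
    (hd : Tendsto d atTop (nhds 0))
    (key : ∀ n, ∀ x ∈ Set.Ioo (0:ℝ) 1, |Fn n x - F x| ≤ d n) :
    Tendsto (fun n => ⨆ x ∈ Set.Ioo (0:ℝ) 1, ((Fn n x : ℝ) : EReal)) atTop
      (nhds (⨆ x ∈ Set.Ioo (0:ℝ) 1, ((F x : ℝ) : EReal))) := by
  set S : EReal := ⨆ x ∈ Set.Ioo (0:ℝ) 1, ((F x : ℝ) : EReal) with hS
  set Sn : ℕ → EReal := fun n => ⨆ x ∈ Set.Ioo (0:ℝ) 1, ((Fn n x : ℝ) : EReal) with hSn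
  have hhalf : (1/2 : ℝ) ∈ Set.Ioo (0:ℝ) 1 := by norm_num
  have hFle : ∀ x ∈ Set.Ioo (0:ℝ) 1, ((F x : ℝ) : EReal) ≤ S :=
    fun x hx => le_iSup₂ (f := fun x (_ : x ∈ Set.Ioo (0:ℝ) 1) => ((F x : ℝ) : EReal)) x hx
  have hFnle : ∀ n, ∀ x ∈ Set.Ioo (0:ℝ) 1, ((Fn n x : ℝ) : EReal) ≤ Sn n :=
    fun n x hx => le_iSup₂ (f := fun x (_ : x ∈ Set.Ioo (0:ℝ) 1) => ((Fn n x : ℝ) : EReal)) x hx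
  have hSnle : ∀ n, Sn n ≤ S + (d n : EReal) := by
    intro n
    refine iSup₂_le fun x hx => ?_
    have h1 : Fn n x ≤ F x + d n := by
      have h := abs_le.mp (key n x hx); linarith [h.1, h.2]
    calc ((Fn n x : ℝ) : EReal) ≤ ((F x + d n : ℝ) : EReal) := EReal.coe_le_coe_iff.2 h1
      _ = ((F x : ℝ) : EReal) + (d n : EReal) := EReal.coe_add _ _
      _ ≤ S + (d n : EReal) := add_le_add (hFle x hx) le_rfl
  have hSle : ∀ n, S ≤ Sn n + (d n : EReal) := by
    intro n
    refine iSup₂_le fun x hx => ?_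
    have h1 : F x ≤ Fn n x + d n := by
      have h := abs_le.mp (key n x hx); linarith [h.1, h.2]
    calc ((F x : ℝ) : EReal) ≤ ((Fn n x + d n : ℝ) : EReal) := EReal.coe_le_coe_iff.2 h1
      _ = ((Fn n x : ℝ) : EReal) + (d n : EReal) := EReal.coe_add _ _
      _ ≤ Sn n + (d n : EReal) := add_le_add (hFnle n x hx) le_rfl
  have hSbot : S ≠ ⊥ := by
    intro h
    have := hFle _ hhalf
    rw [h] at this
    exact (EReal.coe_ne_bot _) (le_bot_iff.mp this)
  by_cases hStop : S = ⊤
  · have hSntop : ∀ n, Sn n = ⊤ := by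
      intro n
      by_contra hne
      have h := hSle n
      rw [hStop] at h
      exact (ne_of_lt (EReal.add_lt_top hne (EReal.coe_ne_top _))) (top_le_iff.mp h)
    rw [hStop]
    exact tendsto_const_nhds.congr (fun n => (hSntop n).symm)
  · obtain ⟨s, hs⟩ : ∃ s : ℝ, S = (s : EReal) :=
      ⟨S.toReal, (EReal.coe_toReal hStop hSbot).symm⟩
    have hSnbot : ∀ n, Sn n ≠ ⊥ := by
      intro n h
      have := hFnle n _ hhalf
      rw [h] at this
      exact (EReal.coe_ne_bot _) (le_bot_iff.mp this)
    have hSntop : ∀ n, Sn n ≠ ⊤ := by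
      intro n h
      have h2 := hSnle n
      rw [h, hs, ← EReal.coe_add] at h2
      exact (EReal.coe_ne_top _) (top_le_iff.mp h2)
    obtain ⟨sn, hsn⟩ : ∃ sn : ℕ → ℝ, ∀ n, Sn n = ((sn n : ℝ) : EReal) :=
      ⟨fun n => (Sn n).toReal, fun n => (EReal.coe_toReal (hSntop n) (hSnbot n)).symm⟩
    have hub : ∀ n, sn n ≤ s + d n := by
      intro n
      have h := hSnle n
      rw [hsn n, hs, ← EReal.coe_add, EReal.coe_le_coe_iff] at h
      exact h
    have hlb : ∀ n, s - d n ≤ sn n := by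
      intro n
      have h := hSle n
      rw [hsn n, hs, ← EReal.coe_add, EReal.coe_le_coe_iff] at h
      linarith
    have hconv : Tendsto sn atTop (nhds s) := by
      have h1 : Tendsto (fun n => s - d n) atTop (nhds s) := by
        simpa using tendsto_const_nhds.sub hd
      have h2 : Tendsto (fun n => s + d n) atTop (nhds s) := by
        simpa using tendsto_const_nhds.add hd
      exact tendsto_of_tendsto_of_tendsto_of_le_of_le h1 h2 hlb hub
    rw [hs]
    exact (EReal.tendsto_coe.2 hconv).congr (fun n => (hsn n).symm)


theorem statement12
    (φ : ℝ → ℝ) (A : Finset ℝ) (hA : (A : Set ℝ) ⊆ Set.Ioo 0 1)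
    (hφint : MeasureTheory.IntegrableOn φ (Set.Ioo 0 1))
    (hφcont : ∀ x ∈ Set.Ioo (0:ℝ) 1, x ∉ A → ContinuousWithinAt φ (Set.Ioo 0 1) x)
    (εbar : ℝ)
    (hεbar : εbar = sInf {t : ℝ | ∃ a ∈ (A : Set ℝ) ∪ {0, 1}, ∃ b ∈ (A : Set ℝ) ∪ {0, 1},
      a < b ∧ t = b - a} / 2)
    (φε : ℝ → ℝ → ℝ)
    (hφεA : ∀ ε ∈ Set.Ico (0:ℝ) εbar, ∀ a ∈ A, ∀ x ∈ Set.Icc (a - ε) (a + ε),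
      φε ε x = φ (a - ε) + (φ (a + ε) - φ (a - ε)) / (2 * ε) * (x - (a - ε)))
    (hφεB : ∀ ε ∈ Set.Ico (0:ℝ) εbar, ∀ x : ℝ,
      (∀ a ∈ A, x ∉ Set.Icc (a - ε) (a + ε)) → φε ε x = φ x)
    (hφbdd : ∃ M, ∀ x ∈ Set.Icc εbar (1 - εbar), |φ x| ≤ M)
    (hlimsup : Filter.limsup (fun x : ℝ => (((1 / x) * ∫ τ in (0:ℝ)..x, φ τ : ℝ) : EReal))
      (nhdsWithin 0 (Set.Ioi 0)) < ⊤)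
    (εn : ℕ → ℝ) (hεn : ∀ n, εn n ∈ Set.Ioo (0:ℝ) εbar)
    (hε : Filter.Tendsto εn Filter.atTop (nhds 0)) :
    Filter.Tendsto
      (fun n => ⨆ x ∈ Set.Ioo (0:ℝ) 1, (((1 / x) * ∫ τ in (0:ℝ)..x, φε (εn n) τ : ℝ) : EReal))
      Filter.atTop
      (nhds (⨆ x ∈ Set.Ioo (0:ℝ) 1, (((1 / x) * ∫ τ in (0:ℝ)..x, φ τ : ℝ) : EReal))) := by
  classical
  obtain ⟨M, hM⟩ := hφbdd
  set S : Set ℝ := (A : Set ℝ) ∪ {0, 1} with hSdef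
  set T : Set ℝ := {t : ℝ | ∃ a ∈ S, ∃ b ∈ S, a < b ∧ t = b - a} with hTdef
  have h0S : (0:ℝ) ∈ S := Or.inr (Or.inl rfl)
  have h1S : (1:ℝ) ∈ S := Or.inr (Or.inr rfl)
  have hT1 : (1:ℝ) ∈ T := ⟨0, h0S, 1, h1S, one_pos, by ring⟩
  have hTfin : T.Finite := by
    have : T ⊆ (fun p : ℝ × ℝ => p.2 - p.1) '' (S ×ˢ S) := by
      rintro t ⟨a, ha, b, hb, -, rfl⟩
      exact ⟨(a, b), ⟨ha, hb⟩, rfl⟩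
    exact Set.Finite.subset (Set.Finite.image _
      ((A.finite_toSet.union ((Set.finite_singleton (1:ℝ)).insert 0)).prod
        (A.finite_toSet.union ((Set.finite_singleton (1:ℝ)).insert 0)))) this
  have hTbdd : BddBelow T := hTfin.bddBelow
  have hgap : ∀ a ∈ S, ∀ b ∈ S, a < b → 2 * εbar ≤ b - a := by
    intro a ha b hb hab
    have : sInf T ≤ b - a := csInf_le hTbdd ⟨a, ha, b, hb, hab, rfl⟩
    rw [hεbar]; linarith
  have hεpos : 0 < εbar := by
    obtain ⟨a, ha, b, hb, hab, habt⟩ := Set.Nonempty.csInf_mem ⟨1, hT1⟩ hTfin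
    rw [hεbar, habt]; linarith
  have hεhalf : εbar ≤ 1 / 2 := by
    have := hgap 0 h0S 1 h1S one_pos; linarith
  have hγlo : ∀ γ ∈ A, 2 * εbar ≤ γ := by
    intro γ hγ
    have := hgap 0 h0S γ (Or.inl hγ) (hA hγ).1; linarith
  have hγhi : ∀ γ ∈ A, 2 * εbar ≤ 1 - γ := by
    intro γ hγ
    have := hgap γ (Or.inl hγ) 1 h1S (hA hγ).2; linarith
  have hM0 : 0 ≤ M := by
    have := hM εbar ⟨le_refl _, by linarith⟩
    exact le_trans (abs_nonneg _) this
  -- interval inclusion facts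
  have hIccM : ∀ ε ∈ Set.Ioo (0:ℝ) εbar, ∀ γ ∈ A,
      Set.Icc (γ - ε) (γ + ε) ⊆ Set.Icc εbar (1 - εbar) := by
    intro ε hε' γ hγ
    have h1 := hγlo γ hγ; have h2 := hγhi γ hγ
    exact Set.Icc_subset_Icc (by linarith [hε'.2]) (by linarith [hε'.2])
  have hIccsub : ∀ ε ∈ Set.Ioo (0:ℝ) εbar, ∀ γ ∈ A,
      Set.Icc (γ - ε) (γ + ε) ⊆ Set.Ioo 0 1 := by
    intro ε hε' γ hγ
    refine (hIccM ε hε' γ hγ).trans ?_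
    exact Set.Icc_subset_Ioo (by linarith) (by linarith)
  -- |φε ε| ≤ M on the intervals
  have hφεbd : ∀ ε ∈ Set.Ioo (0:ℝ) εbar, ∀ γ ∈ A, ∀ τ ∈ Set.Icc (γ - ε) (γ + ε),
      |φε ε τ| ≤ M := by
    intro ε hε' γ hγ τ hτ
    have hε0 : (0:ℝ) < ε := hε'.1
    rw [hφεA ε ⟨le_of_lt hε0, hε'.2⟩ γ hγ τ hτ]
    have hMm : |φ (γ - ε)| ≤ M := hM _ (hIccM ε hε' γ hγ ⟨le_refl _, by linarith⟩)
    have hMp : |φ (γ + ε)| ≤ M := hM _ (hIccM ε hε' γ hγ ⟨by linarith, le_refl _⟩)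
    set t : ℝ := (τ - (γ - ε)) / (2 * ε) with ht
    have ht0 : 0 ≤ t := div_nonneg (by linarith [hτ.1]) (by linarith)
    have ht1 : t ≤ 1 := by
      rw [div_le_one (by linarith)]; linarith [hτ.2]
    have heq : φ (γ - ε) + (φ (γ + ε) - φ (γ - ε)) / (2 * ε) * (τ - (γ - ε))
        = (1 - t) * φ (γ - ε) + t * φ (γ + ε) := by
      rw [ht]; have h2e : (2 * ε) ≠ 0 := by positivity
      field_simp; ring
    rw [heq]
    calc |(1 - t) * φ (γ - ε) + t * φ (γ + ε)|
        ≤ |(1 - t) * φ (γ - ε)| + |t * φ (γ + ε)| := abs_add_le _ _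
      _ = (1 - t) * |φ (γ - ε)| + t * |φ (γ + ε)| := by
          rw [abs_mul, abs_mul, abs_of_nonneg (by linarith : (0:ℝ) ≤ 1 - t),
            abs_of_nonneg ht0]
      _ ≤ (1 - t) * M + t * M := by
          gcongr <;> linarith
      _ = M := by ring
  -- integrability of φε ε on Ioo 0 1
  have hφεint : ∀ ε ∈ Set.Ioo (0:ℝ) εbar, IntegrableOn (φε ε) (Set.Ioo 0 1) := by
    intro ε hε'
    set U : Set ℝ := ⋃ γ ∈ A, Set.Icc (γ - ε) (γ + ε) with hU
    have hUm : MeasurableSet U := A.measurableSet_biUnion (fun γ _ => measurableSet_Icc)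
    have h1 : IntegrableOn (φε ε) (Set.Ioo 0 1 \ U) := by
      refine (hφint.mono_set Set.diff_subset).congr_fun ?_ (measurableSet_Ioo.diff hUm)
      intro τ hτ
      refine (hφεB ε ⟨le_of_lt hε'.1, hε'.2⟩ τ ?_).symm
      intro γ hγ hmem
      exact hτ.2 (Set.mem_biUnion hγ hmem)
    have h2 : IntegrableOn (φε ε) U := by
      rw [hU, integrableOn_finset_iUnion]
      intro γ hγ
      have : IntegrableOn (fun x => φ (γ - ε) + (φ (γ + ε) - φ (γ - ε)) / (2 * ε) * (x - (γ - ε)))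
          (Set.Icc (γ - ε) (γ + ε)) := by
        apply Continuous.integrableOn_Icc
        exact continuous_const.add (continuous_const.mul (continuous_id.sub continuous_const))
      exact this.congr_fun (fun x hx => (hφεA ε ⟨le_of_lt hε'.1, hε'.2⟩ γ hγ x hx).symm)
        measurableSet_Icc
    have h3 : IntegrableOn (φε ε) ((Set.Ioo 0 1 \ U) ∪ U) := h1.union h2
    refine h3.mono_set ?_
    intro x hx
    by_cases hxU : x ∈ U
    · exact Or.inr hxU
    · exact Or.inl ⟨hx, hxU⟩
  -- the key bound on the integral of |φε ε - φ|
  have habs : ∀ ε ∈ Set.Ioo (0:ℝ) εbar,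
      ∫ τ in Set.Ioo (0:ℝ) 1, |φε ε τ - φ τ|
        ≤ ∑ γ ∈ A, (2 * M * ε + ∫ τ in Set.Icc (γ - ε) (γ + ε), |φ τ|) := by
    intro ε hε'
    have hε0 : (0:ℝ) < ε := hε'.1
    have hφabs : IntegrableOn (fun a => |φ a|) (Set.Ioo (0:ℝ) 1) := hφint.abs
    set h : ℝ → ℝ := fun τ =>
      ∑ γ ∈ A, Set.indicator (Set.Icc (γ - ε) (γ + ε)) (fun τ => M + |φ τ|) τ with hh
    have hgint : IntegrableOn (fun τ => |φε ε τ - φ τ|) (Set.Ioo 0 1) :=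
      ((hφεint ε hε').sub hφint).abs
    have hterm : ∀ γ ∈ A, IntegrableOn (fun τ => M + |φ τ|) (Set.Icc (γ - ε) (γ + ε)) := by
      intro γ hγ
      refine (integrableOn_const (μ := volume) measure_Icc_lt_top.ne enorm_ne_top).add ?_
      exact hφabs.mono_set (hIccsub ε hε' γ hγ)
    have htermind : ∀ γ ∈ A,
        Integrable (Set.indicator (Set.Icc (γ - ε) (γ + ε)) (fun τ => M + |φ τ|))
          (volume.restrict (Set.Ioo (0:ℝ) 1)) := by
      intro γ hγ
      exact ((hterm γ hγ).integrable_indicator measurableSet_Icc).integrableOn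
    have hhint : IntegrableOn h (Set.Ioo 0 1) := by
      rw [hh]
      exact integrable_finset_sum A (fun γ hγ => htermind γ hγ)
    have hle : ∀ τ ∈ Set.Ioo (0:ℝ) 1, |φε ε τ - φ τ| ≤ h τ := by
      intro τ hτ
      have hnn : ∀ γ ∈ A,
          0 ≤ Set.indicator (Set.Icc (γ - ε) (γ + ε)) (fun τ => M + |φ τ|) τ :=
        fun γ _ => Set.indicator_nonneg (fun x _ => by positivity) τ
      by_cases hex : ∃ γ ∈ A, τ ∈ Set.Icc (γ - ε) (γ + ε)
      · obtain ⟨γ, hγ, hτγ⟩ := hex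
        have h1 : |φε ε τ - φ τ| ≤ M + |φ τ| := by
          calc |φε ε τ - φ τ| ≤ |φε ε τ| + |φ τ| := abs_sub _ _
            _ ≤ M + |φ τ| := by linarith [hφεbd ε hε' γ hγ τ hτγ]
        have h2 : M + |φ τ|
            = Set.indicator (Set.Icc (γ - ε) (γ + ε)) (fun τ => M + |φ τ|) τ :=
          (Set.indicator_of_mem hτγ (fun τ => M + |φ τ|)).symm
        refine h1.trans (h2.le.trans ?_)
        exact Finset.single_le_sum hnn hγ
      · push_neg at hex
        have : φε ε τ = φ τ := hφεB ε ⟨hε0.le, hε'.2⟩ τ hex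
        rw [this, sub_self, abs_zero]
        exact Finset.sum_nonneg hnn
    calc ∫ τ in Set.Ioo (0:ℝ) 1, |φε ε τ - φ τ|
        ≤ ∫ τ in Set.Ioo (0:ℝ) 1, h τ :=
          setIntegral_mono_on hgint hhint measurableSet_Ioo hle
      _ = ∑ γ ∈ A, ∫ τ in Set.Ioo (0:ℝ) 1,
            Set.indicator (Set.Icc (γ - ε) (γ + ε)) (fun τ => M + |φ τ|) τ := by
          rw [hh]
          exact integral_finset_sum A (fun γ hγ => htermind γ hγ)
      _ = ∑ γ ∈ A, (2 * M * ε + ∫ τ in Set.Icc (γ - ε) (γ + ε), |φ τ|) := by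
          refine Finset.sum_congr rfl (fun γ hγ => ?_)
          rw [setIntegral_indicator measurableSet_Icc,
            Set.inter_eq_self_of_subset_right (hIccsub ε hε' γ hγ)]
          rw [integral_add (μ := volume.restrict (Set.Icc (γ - ε) (γ + ε))) (show IntegrableOn (fun _ => M) (Set.Icc (γ - ε) (γ + ε)) volume from
              integrableOn_const measure_Icc_lt_top.ne enorm_ne_top)
            (hφabs.mono_set (hIccsub ε hε' γ hγ))]
          congr 1
          rw [setIntegral_const, measureReal_def, Real.volume_Icc, smul_eq_mul]
          rw [ENNReal.toReal_ofReal (by linarith : (0:ℝ) ≤ γ + ε - (γ - ε))]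
          ring
  -- the distance sequence
  set d : ℕ → ℝ := fun n =>
    (∑ γ ∈ A, (2 * M * εn n + ∫ τ in Set.Icc (γ - εn n) (γ + εn n), |φ τ|)) / εbar with hd
  have hd0 : ∀ n, 0 ≤ d n := by
    intro n
    apply div_nonneg _ (le_of_lt hεpos)
    apply Finset.sum_nonneg
    intro γ hγ
    have h1 : 0 ≤ 2 * M * εn n := by
      have := (hεn n).1; positivity
    have h2 : 0 ≤ ∫ τ in Set.Icc (γ - εn n) (γ + εn n), |φ τ| :=
      setIntegral_nonneg measurableSet_Icc (fun τ _ => abs_nonneg _)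
    linarith
  have hdlim : Filter.Tendsto d Filter.atTop (nhds 0) := by
    have hφabs : IntegrableOn (fun a => |φ a|) (Set.Ioo (0:ℝ) 1) := hφint.abs
    have hIγ : ∀ γ ∈ A, Tendsto (fun n => ∫ τ in Set.Icc (γ - εn n) (γ + εn n), |φ τ|)
        atTop (nhds 0) := by
      intro γ hγ
      have hrw : ∀ n, (∫ τ in Set.Icc (γ - εn n) (γ + εn n), |φ τ|)
          = ∫ τ in Set.Ioo (0:ℝ) 1,
              Set.indicator (Set.Icc (γ - εn n) (γ + εn n)) (fun τ => |φ τ|) τ := by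
        intro n
        rw [setIntegral_indicator measurableSet_Icc,
          Set.inter_eq_self_of_subset_right (hIccsub _ (hεn n) γ hγ)]
      simp only [hrw]
      have hDCT : Tendsto (fun n => ∫ τ in Set.Ioo (0:ℝ) 1,
          Set.indicator (Set.Icc (γ - εn n) (γ + εn n)) (fun τ => |φ τ|) τ)
          atTop (nhds (∫ τ in Set.Ioo (0:ℝ) 1, (fun _ : ℝ => (0:ℝ)) τ)) := by
        apply tendsto_integral_of_dominated_convergence (fun τ => |φ τ|)
        · intro n
          exact hφabs.aestronglyMeasurable.indicator measurableSet_Icc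
        · exact hφabs
        · intro n
          refine Filter.Eventually.of_forall (fun τ => ?_)
          rw [Real.norm_eq_abs,
            abs_of_nonneg (Set.indicator_nonneg (fun x _ => abs_nonneg _) τ)]
          exact Set.indicator_le_self' (fun x _ => abs_nonneg _) τ
        · have hsing : (volume.restrict (Set.Ioo (0:ℝ) 1)) {γ} = 0 := by
            rw [Measure.restrict_apply (measurableSet_singleton γ)]
            exact measure_mono_null Set.inter_subset_left Real.volume_singleton
          have hae : ∀ᵐ τ ∂(volume.restrict (Set.Ioo (0:ℝ) 1)), τ ≠ γ := by
            rw [MeasureTheory.ae_iff]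
            convert hsing using 2
            ext τ; simp
          filter_upwards [hae] with τ hτ
          have hc : 0 < |τ - γ| := abs_pos.2 (sub_ne_zero.2 hτ)
          have hev : ∀ᶠ n in atTop, εn n < |τ - γ| := hε.eventually_lt_const hc
          refine Tendsto.congr' ?_ tendsto_const_nhds
          filter_upwards [hev] with n hn
          refine (Set.indicator_of_notMem ?_ _).symm
          intro hmem
          rcases lt_abs.mp hn with h | h
          · linarith [hmem.2]
          · linarith [hmem.1]
      simpa using hDCT
    have hsum : Tendsto (fun n =>
        ∑ γ ∈ A, (2 * M * εn n + ∫ τ in Set.Icc (γ - εn n) (γ + εn n), |φ τ|))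
        atTop (nhds 0) := by
      have h := tendsto_finset_sum A
        (fun γ hγ => (((hε.const_mul (2 * M))).add (hIγ γ hγ)))
      simpa using h
    simpa [hd] using hsum.div_const εbar
  -- the pointwise estimate
  have key : ∀ n, ∀ x ∈ Set.Ioo (0:ℝ) 1,
      |(1 / x) * (∫ τ in (0:ℝ)..x, φε (εn n) τ) - (1 / x) * (∫ τ in (0:ℝ)..x, φ τ)| ≤ d n := by
    intro n x hx
    have hε' := hεn n
    have hε0 : (0:ℝ) < εn n := hε'.1
    have hεε : εn n < εbar := hε'.2
    have hx0 : 0 < x := hx.1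
    have hx1 : x < 1 := hx.2
    have hsub : Set.Ioc (0:ℝ) x ⊆ Set.Ioo 0 1 :=
      fun τ hτ => ⟨hτ.1, lt_of_le_of_lt hτ.2 hx1⟩
    have hiφ : IntervalIntegrable φ volume 0 x := by
      rw [intervalIntegrable_iff, Set.uIoc_of_le hx0.le]
      exact hφint.mono_set hsub
    have hiφε : IntervalIntegrable (φε (εn n)) volume 0 x := by
      rw [intervalIntegrable_iff, Set.uIoc_of_le hx0.le]
      exact (hφεint (εn n) hε').mono_set hsub
    rw [← mul_sub, ← intervalIntegral.integral_sub hiφε hiφ]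
    by_cases hxε : x ≤ εbar
    · have hcongr : ∫ τ in (0:ℝ)..x, (φε (εn n) τ - φ τ) = ∫ τ in (0:ℝ)..x, (0:ℝ) := by
        refine intervalIntegral.integral_congr (fun τ hτ => ?_)
        rw [Set.uIcc_of_le hx0.le] at hτ
        have hτx : τ ≤ x := hτ.2
        have : φε (εn n) τ = φ τ := by
          refine hφεB (εn n) ⟨hε0.le, hεε⟩ τ (fun γ hγ hmem => ?_)
          have := hγlo γ hγ
          have := hmem.1
          linarith
        simp [this]
      rw [hcongr]
      simp [hd0 n]
    · push_neg at hxε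
      have hgint : IntegrableOn (fun τ => |φε (εn n) τ - φ τ|) (Set.Ioo 0 1) :=
        ((hφεint (εn n) hε').sub hφint).abs
      have h1 : |∫ τ in (0:ℝ)..x, (φε (εn n) τ - φ τ)|
          ≤ ∫ τ in Set.Ioo (0:ℝ) 1, |φε (εn n) τ - φ τ| := by
        calc |∫ τ in (0:ℝ)..x, (φε (εn n) τ - φ τ)|
            ≤ ∫ τ in (0:ℝ)..x, |φε (εn n) τ - φ τ| :=
              intervalIntegral.abs_integral_le_integral_abs hx0.le
          _ = ∫ τ in Set.Ioc (0:ℝ) x, |φε (εn n) τ - φ τ| :=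
              intervalIntegral.integral_of_le hx0.le
          _ ≤ ∫ τ in Set.Ioo (0:ℝ) 1, |φε (εn n) τ - φ τ| :=
              setIntegral_mono_set hgint
                (Filter.Eventually.of_forall (fun τ => abs_nonneg _))
                (HasSubset.Subset.eventuallyLE hsub)
      have h2 := (h1.trans (habs (εn n) hε'))
      rw [abs_mul, abs_of_pos (by positivity : (0:ℝ) < 1 / x)]
      have hxinv : 1 / x ≤ 1 / εbar := one_div_le_one_div_of_le hεpos hxε.le
      calc (1 / x) * |∫ τ in (0:ℝ)..x, (φε (εn n) τ - φ τ)|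
          ≤ (1 / εbar) * (∑ γ ∈ A, (2 * M * εn n
              + ∫ τ in Set.Icc (γ - εn n) (γ + εn n), |φ τ|)) :=
            mul_le_mul hxinv h2 (abs_nonneg _) (by positivity)
        _ = d n := by rw [hd]; simp [one_div, div_eq_mul_inv, mul_comm]
  -- the EReal endgame
  exact aux_ereal_sup_tendsto (fun x => (1 / x) * ∫ τ in (0:ℝ)..x, φ τ)
    (fun n x => (1 / x) * ∫ τ in (0:ℝ)..x, φε (εn n) τ) d hdlim key
end

section
/- If ℓ_p := liminf_{ξ→0⁺} κ(ξ)^{p−1}/ξ = +∞, then for no c ∈ ℝ does problem (1.4) admit a solution; i.e., no traveling wave solution of any speed exists. -/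
open Filter Set MeasureTheory Topology

/-- A traveling-wave solution (solution of problem (1.4)) with speed `c`,
together with its associated continuous function `Φ`. -/
def IsTWSol (p : ℝ) (Θ : Set ℝ) (f g h d : ℝ → ℝ) (c : ℝ) (v Φ : ℝ → ℝ) : Prop :=
  Continuous v ∧ (∀ z, v z ∈ Set.Icc (0:ℝ) 1) ∧
  Filter.Tendsto v Filter.atBot (nhds 1) ∧
  Filter.Tendsto v Filter.atTop (nhds 0) ∧
  ContDiffOn ℝ 1 v {z : ℝ | v z ∉ Θ ∪ ({0, 1} : Set ℝ)} ∧
  Continuous Φ ∧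
  (∀ a b : ℝ, a < b → ContDiffOn ℝ 1 v (Set.Ioo a b) →
    (∀ z ∈ Set.Ioo a b, v z ∈ Set.Ioo (0:ℝ) 1) →
    ∀ z ∈ Set.Ioo a b, Φ z = d (v z) * |deriv v z| ^ (p - 2) * deriv v z) ∧
  Filter.Tendsto Φ Filter.atBot (nhds 0) ∧
  Filter.Tendsto Φ Filter.atTop (nhds 0) ∧
  (∀ z, (v z = 0 ∨ v z = 1) → Φ z = 0) ∧
  (∀ z₁ z₂ : ℝ,
    Φ z₂ - Φ z₁ + (∫ ξ in (v z₁)..(v z₂), (c * g ξ - f ξ)) + (∫ z in z₁..z₂, h (v z)) = 0)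

theorem statement14
    (p : ℝ) (hp : 1 < p)
    (Θ : Set ℝ) (hΘfin : Θ.Finite) (hΘsub : Θ ⊆ Set.Ioo 0 1)
    (f g h d : ℝ → ℝ)
    (hfb : ∃ M, ∀ x ∈ Set.Icc (0:ℝ) 1, |f x| ≤ M)
    (hgb : ∃ M, ∀ x ∈ Set.Icc (0:ℝ) 1, |g x| ≤ M)
    (hhb : ∃ M, ∀ x ∈ Set.Icc (0:ℝ) 1, |h x| ≤ M)
    (hfc : ∀ x ∈ Set.Icc (0:ℝ) 1 \ Θ, ContinuousWithinAt f (Set.Icc 0 1) x)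
    (hgc : ∀ x ∈ Set.Icc (0:ℝ) 1 \ Θ, ContinuousWithinAt g (Set.Icc 0 1) x)
    (hhc : ∀ x ∈ Set.Icc (0:ℝ) 1 \ Θ, ContinuousWithinAt h (Set.Icc 0 1) x)
    (hdc : ∀ x ∈ Set.Ioo (0:ℝ) 1 \ Θ, ContinuousWithinAt d (Set.Ioo 0 1) x)
    (hdbounds : ∀ a b : ℝ, 0 < a → a < b → b < 1 →
      (∃ m > 0, ∀ x ∈ Set.Icc a b, m ≤ d x) ∧ (∃ M, ∀ x ∈ Set.Icc a b, d x ≤ M))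
    (hh0 : h 0 = 0) (hh1 : h 1 = 0)
    (hhpos : ∀ a b : ℝ, 0 < a → a < b → b < 1 → ∃ m > 0, ∀ x ∈ Set.Icc a b, m ≤ h x)
    (κ : ℝ → ℝ) (hκdef : ∀ ξ, κ ξ = d ξ ^ ((1:ℝ)/(p-1)) * h ξ)
    (hκint : MeasureTheory.IntegrableOn κ (Set.Ioo 0 1))
    (hlp : Filter.liminf (fun ξ : ℝ => ((κ ξ ^ (p - 1) / ξ : ℝ) : EReal))
      (nhdsWithin 0 (Set.Ioi 0)) = ⊤) :
    ∀ c : ℝ, ∀ v Φ : ℝ → ℝ, ¬ IsTWSol p Θ f g h d c v Φ := by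
  intro c v Φ hsol
  obtain ⟨hvcont, hvmem, hvbot, hvtop, hvC1, hΦcont, hΦeq, hΦbot, hΦtop, hΦ01, hiv⟩ := hsol
  obtain ⟨Mf, hMf⟩ := hfb
  obtain ⟨Mg, hMg⟩ := hgb
  set C : ℝ := |c| * Mg + Mf + 1 with hCdef
  have hMf0 : 0 ≤ Mf := le_trans (abs_nonneg _) (hMf 0 (by norm_num))
  have hMg0 : 0 ≤ Mg := le_trans (abs_nonneg _) (hMg 0 (by norm_num))
  have hC0 : 0 < C := by
    have : 0 ≤ |c| * Mg := mul_nonneg (abs_nonneg _) hMg0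
    rw [hCdef]; linarith
  have h6C : (0:ℝ) < 6 * C := by linarith
  have hCb : ∀ ξ ∈ Icc (0:ℝ) 1, |c * g ξ - f ξ| ≤ C := by
    intro ξ hξ
    have h1 : |c * g ξ - f ξ| ≤ |c * g ξ| + |f ξ| := abs_sub _ _
    have h2 : |c * g ξ| = |c| * |g ξ| := abs_mul _ _
    have h3 : |c| * |g ξ| ≤ |c| * Mg := mul_le_mul_of_nonneg_left (hMg ξ hξ) (abs_nonneg _)
    have h4 := hMf ξ hξ
    rw [hCdef]; rw [h2] at h1; linarith
  -- bound on the interval integral of c*g - f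
  have hIbound : ∀ a b : ℝ, a ∈ Icc (0:ℝ) 1 → b ∈ Icc (0:ℝ) 1 →
      |∫ ξ in a..b, (c * g ξ - f ξ)| ≤ C * |b - a| := by
    intro a b ha hb
    have key : ∀ x ∈ Set.uIoc a b, ‖c * g x - f x‖ ≤ C := by
      intro x hx
      obtain ⟨h1, h2⟩ := hx
      have hx' : x ∈ Icc (0:ℝ) 1 :=
        ⟨le_trans (le_min ha.1 hb.1) h1.le, le_trans h2 (max_le ha.2 hb.2)⟩
      rw [Real.norm_eq_abs]; exact hCb x hx'
    have := intervalIntegral.norm_integral_le_of_norm_le_const key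
    simpa [Real.norm_eq_abs] using this
  -- h is positive on (0,1), nonneg on [0,1]
  have hhpos' : ∀ x : ℝ, 0 < x → x < 1 → 0 < h x := by
    intro x hx0 hx1
    obtain ⟨m, hm, hmle⟩ := hhpos (x/2) ((x+1)/2) (by linarith) (by linarith) (by linarith)
    exact lt_of_lt_of_le hm (hmle x ⟨by linarith, by linarith⟩)
  have hh_nonneg : ∀ x ∈ Icc (0:ℝ) 1, 0 ≤ h x := by
    rintro x ⟨hx0, hx1⟩
    rcases eq_or_lt_of_le hx0 with h0 | h0
    · rw [← h0, hh0]
    rcases eq_or_lt_of_le hx1 with h1 | h1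
    · rw [h1, hh1]
    · exact (hhpos' x h0 h1).le
  have hd_pos : ∀ x : ℝ, 0 < x → x < 1 → 0 < d x := by
    intro x hx0 hx1
    obtain ⟨⟨m, hm, hmle⟩, _⟩ := hdbounds (x/2) ((x+1)/2) (by linarith) (by linarith) (by linarith)
    exact lt_of_lt_of_le hm (hmle x ⟨by linarith, by linarith⟩)
  -- global lower bound for Φ
  have hΦlow : ∀ z, -(C * v z) ≤ Φ z := by
    intro z
    have key : ∀ ε : ℝ, 0 < ε → -(Φ z) ≤ C * v z + ε := by
      intro ε hε
      set ε₀ := ε / (1 + C) with hε₀def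
      have hε₀ : 0 < ε₀ := div_pos hε (by linarith)
      have h1 : ∀ᶠ s in atTop, |Φ s| < ε₀ := by
        have := (Metric.tendsto_nhds.mp hΦtop) ε₀ hε₀
        simpa [Real.dist_eq] using this
      have h2 : ∀ᶠ s in atTop, |v s| < ε₀ := by
        have := (Metric.tendsto_nhds.mp hvtop) ε₀ hε₀
        simpa [Real.dist_eq] using this
      obtain ⟨s, ⟨hsΦ, hsv⟩, hsz⟩ := ((h1.and h2).and (eventually_ge_atTop z)).exists
      have hid := hiv z s
      have hJ : 0 ≤ ∫ u in z..s, h (v u) :=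
        intervalIntegral.integral_nonneg hsz (fun u _ => hh_nonneg _ (hvmem u))
      have hI : |∫ ξ in (v z)..(v s), (c * g ξ - f ξ)| ≤ C * |v s - v z| :=
        hIbound _ _ (hvmem z) (hvmem s)
      have hvz0 := (hvmem z).1
      have hvs0 := (hvmem s).1
      have hvs : |v s - v z| ≤ v s + v z := abs_le.mpr ⟨by linarith, by linarith⟩
      have hvs' : v s < ε₀ := lt_of_le_of_lt (le_abs_self _) hsv
      have habsΦ := abs_lt.mp hsΦ
      have hIc : C * |v s - v z| ≤ C * (v s + v z) := mul_le_mul_of_nonneg_left hvs hC0.le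
      have hIc2 : C * (v s + v z) ≤ C * v z + C * ε₀ := by nlinarith
      have hnegI := neg_abs_le (∫ ξ in (v z)..(v s), (c * g ξ - f ξ))
      have hεeq : ε₀ * (1 + C) = ε := by rw [hε₀def]; field_simp
      nlinarith [hid, habsΦ.1, hJ, hI]
    have : -(Φ z) ≤ C * v z := by
      refine le_of_forall_pos_le_add ?_
      intro ε hε; exact key ε hε
    linarith
  -- extract the κ lower bound from the liminf hypothesis
  set L : ℝ := C * (6 * C) ^ (p - 1) with hLdef
  have hp1 : (0:ℝ) < p - 1 := by linarith
  have hLev : ∀ᶠ ξ in 𝓝[>] (0:ℝ), (L : EReal) < ((κ ξ ^ (p - 1) / ξ : ℝ) : EReal) := by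
    apply Filter.eventually_lt_of_lt_liminf
    · rw [hlp]; exact EReal.coe_lt_top L
    · exact Filter.isBoundedUnder_of ⟨⊥, fun x => bot_le⟩
  obtain ⟨δ₁, hδ₁mem, hδ₁⟩ := mem_nhdsGT_iff_exists_Ioo_subset.mp hLev
  have hδ₁pos : (0:ℝ) < δ₁ := hδ₁mem
  have hκge : ∀ ξ : ℝ, 0 < ξ → ξ < δ₁ → L * ξ ≤ κ ξ ^ (p - 1) := by
    intro ξ hξ0 hξ1
    have h1 : (L : EReal) < ((κ ξ ^ (p - 1) / ξ : ℝ) : EReal) := hδ₁ ⟨hξ0, hξ1⟩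
    have h2 : L < κ ξ ^ (p - 1) / ξ := by exact_mod_cast h1
    rw [lt_div_iff₀ hξ0] at h2
    linarith [h2]
  -- a positive lower bound for Θ
  have hρ : ∃ ρ : ℝ, 0 < ρ ∧ ∀ θ ∈ Θ, ρ ≤ θ := by
    rcases Θ.eq_empty_or_nonempty with hE | hNE
    · exact ⟨1, one_pos, by simp [hE]⟩
    · refine ⟨sInf Θ, (hΘsub (hNE.csInf_mem hΘfin)).1, fun θ hθ => csInf_le hΘfin.bddBelow hθ⟩
  obtain ⟨ρ, hρ0, hρle⟩ := hρ
  set δ : ℝ := min (min δ₁ ρ) 1 / 2 with hδdef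
  have hδmin1 : min (min δ₁ ρ) 1 ≤ δ₁ := le_trans (min_le_left _ _) (min_le_left _ _)
  have hδmin2 : min (min δ₁ ρ) 1 ≤ ρ := le_trans (min_le_left _ _) (min_le_right _ _)
  have hδmin3 : min (min δ₁ ρ) 1 ≤ 1 := min_le_right _ _
  have hδpos : 0 < δ := by
    have := lt_min (lt_min hδ₁pos hρ0) one_pos
    rw [hδdef]; linarith
  have hδδ₁ : δ < δ₁ := by rw [hδdef]; linarith
  have hδρ : δ < ρ := by rw [hδdef]; linarith
  have hδ1 : δ < 1 := by rw [hδdef]; linarith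
  have hδΘ : ∀ x : ℝ, x ≤ δ → x ∉ Θ := by
    intro x hx hmem
    have := hρle x hmem
    linarith
  -- the last crossing of level δ
  set A : Set ℝ := {z | δ ≤ v z} with hA
  have hAclosed : IsClosed A := isClosed_le continuous_const hvcont
  have hAne : A.Nonempty := by
    have hev : ∀ᶠ z in atBot, δ < v z := hvbot.eventually (eventually_gt_nhds hδ1)
    obtain ⟨z, hz⟩ := hev.exists
    exact ⟨z, hz.le⟩
  have hAbdd : BddAbove A := by
    have hev : ∀ᶠ z in atTop, v z < δ := hvtop.eventually (eventually_lt_nhds hδpos)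
    obtain ⟨Z, hZ⟩ := eventually_atTop.mp hev
    refine ⟨Z, fun a ha => ?_⟩
    by_contra hc
    push_neg at hc
    exact absurd ha (not_le.mpr (hZ a hc.le))
  set zs : ℝ := sSup A with hzsdef
  have hzsA : zs ∈ A := hAclosed.csSup_mem hAne hAbdd
  have hlt : ∀ z, zs < z → v z < δ := by
    intro z hz
    by_contra hc
    push_neg at hc
    exact absurd (le_csSup hAbdd hc) (not_le.mpr hz)
  have hvzs : v zs = δ := by
    refine le_antisymm ?_ hzsA
    have ht : Tendsto v (𝓝[>] zs) (𝓝 (v zs)) :=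
      (hvcont.tendsto zs).mono_left nhdsWithin_le_nhds
    exact le_of_tendsto ht (eventually_nhdsWithin_of_forall (fun z hz => (hlt z hz).le))
  -- the set where v is regular
  set S : Set ℝ := {z : ℝ | v z ∉ Θ ∪ ({0, 1} : Set ℝ)} with hS
  have hSopen : IsOpen S := by
    have hfinite : (Θ ∪ ({0, 1} : Set ℝ)).Finite := hΘfin.union (by simp)
    have : S = v ⁻¹' (Θ ∪ ({0, 1} : Set ℝ))ᶜ := rfl
    rw [this]
    exact hfinite.isClosed.isOpen_compl.preimage hvcont
  have hmemS : ∀ z, 0 < v z → v z ≤ δ → z ∈ S := by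
    intro z h0 h1
    simp only [hS, mem_setOf_eq, Set.mem_union, not_or]
    refine ⟨hδΘ _ h1, ?_⟩
    simp only [Set.mem_insert_iff, Set.mem_singleton_iff, not_or]
    exact ⟨ne_of_gt h0, by linarith⟩
  have hdiff : ∀ z ∈ S, DifferentiableAt ℝ v z := fun z hz =>
    (hvC1.differentiableOn one_ne_zero).differentiableAt (hSopen.mem_nhds hz)
  have hderivcont : ContinuousOn (deriv v) S :=
    hvC1.continuousOn_deriv_of_isOpen hSopen le_rfl
  -- Φ formula
  have hΦform : ∀ z, 0 < v z → v z < 1 → v z ∉ Θ →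
      Φ z = d (v z) * |deriv v z| ^ (p - 2) * deriv v z := by
    intro z h0 h1 hΘz
    have hzS : z ∈ S := by
      simp only [hS, mem_setOf_eq, Set.mem_union, not_or]
      refine ⟨hΘz, ?_⟩
      simp only [Set.mem_insert_iff, Set.mem_singleton_iff, not_or]
      exact ⟨ne_of_gt h0, ne_of_lt h1⟩
    have hU : IsOpen (S ∩ v ⁻¹' (Ioo 0 1)) := hSopen.inter (isOpen_Ioo.preimage hvcont)
    have hzU : z ∈ S ∩ v ⁻¹' (Ioo 0 1) := ⟨hzS, ⟨h0, h1⟩⟩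
    obtain ⟨l, u, hlu, hsub⟩ := mem_nhds_iff_exists_Ioo_subset.mp (hU.mem_nhds hzU)
    exact hΦeq l u (lt_trans hlu.1 hlu.2) (hvC1.mono (fun y hy => (hsub hy).1))
      (fun y hy => (hsub hy).2) z hlu
  -- Φ zs ≤ 0
  have hv0zs : 0 < v zs := by rw [hvzs]; exact hδpos
  have hv1zs : v zs < 1 := by rw [hvzs]; exact hδ1
  have hzsS : zs ∈ S := hmemS zs hv0zs (le_of_eq hvzs)
  have hdzs : deriv v zs ≤ 0 := by
    have hdrv := (hdiff zs hzsS).hasDerivAt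
    have hsl := hasDerivAt_iff_tendsto_slope.mp hdrv
    have hsl' : Tendsto (slope v zs) (𝓝[>] zs) (𝓝 (deriv v zs)) :=
      hsl.mono_left (nhdsWithin_mono _ (fun x hx => ne_of_gt hx))
    refine le_of_tendsto hsl' (eventually_nhdsWithin_of_forall (fun z hz => ?_))
    rw [slope_def_field]
    apply div_nonpos_of_nonpos_of_nonneg
    · have := hlt z hz; rw [hvzs]; linarith
    · have : zs < z := hz
      linarith
  have hΦzs : Φ zs ≤ 0 := by
    rw [hΦform zs hv0zs hv1zs (by rw [hvzs]; exact hδΘ δ le_rfl)]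
    have h1 : 0 ≤ d (v zs) * |deriv v zs| ^ (p - 2) :=
      mul_nonneg (hd_pos _ hv0zs hv1zs).le (Real.rpow_nonneg (abs_nonneg _) _)
    exact mul_nonpos_iff.mpr (Or.inl ⟨h1, hdzs⟩)
  -- the key claim
  have hkey : ∀ t, zs ≤ t → (∀ z ∈ Icc zs t, 0 < v z) → 2/3 * δ ≤ v t := by
    intro t hzt hpos
    have hle : ∀ z ∈ Icc zs t, v z ≤ δ := by
      intro z hz
      rcases eq_or_lt_of_le hz.1 with he | hl
      · rw [← he, hvzs]
      · exact (hlt z hl).le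
    have hSsub : Icc zs t ⊆ S := fun z hz => hmemS z (hpos z hz) (hle z hz)
    -- pointwise derivative bound
    have hder : ∀ z ∈ Icc zs t, -(h (v z) / (6 * C)) ≤ deriv v z := by
      intro z hz
      have h0 := hpos z hz
      have h1 := hle z hz
      have hv1 : v z < 1 := lt_of_le_of_lt h1 hδ1
      have hΘz : v z ∉ Θ := hδΘ _ h1
      have hΦz := hΦform z h0 hv1 hΘz
      have hhv0 : 0 < h (v z) := hhpos' _ h0 hv1
      rcases le_or_gt 0 (deriv v z) with hd0 | hd0
      · have : 0 ≤ h (v z) / (6 * C) := div_nonneg hhv0.le h6C.le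
        linarith
      · have hw0 : 0 < -deriv v z := neg_pos.mpr hd0
        have habs : |deriv v z| = -deriv v z := abs_of_neg hd0
        have hdz : 0 < d (v z) := hd_pos _ h0 hv1
        have hrw : Φ z = -(d (v z) * (-deriv v z) ^ (p - 1)) := by
          rw [hΦz, habs, show p - 1 = (p - 2) + 1 by ring,
            Real.rpow_add_one (ne_of_gt hw0)]
          ring
        have hdw : d (v z) * (-deriv v z) ^ (p - 1) ≤ C * v z := by
          have h3 := hΦlow z
          rw [hrw] at h3
          linarith
        have hκ := hκge (v z) h0 (lt_of_le_of_lt h1 hδδ₁)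
        have hκval : κ (v z) ^ (p - 1) = d (v z) * h (v z) ^ (p - 1) := by
          have hbase : (d (v z) ^ ((1:ℝ)/(p-1))) ^ (p - 1) = d (v z) := by
            rw [← Real.rpow_mul hdz.le, one_div, inv_mul_cancel₀ (ne_of_gt hp1),
              Real.rpow_one]
          rw [hκdef (v z), Real.mul_rpow (Real.rpow_nonneg hdz.le _) hhv0.le, hbase]
        have hchain : ((6 * C) * (-deriv v z)) ^ (p - 1) ≤ h (v z) ^ (p - 1) := by
          rw [Real.mul_rpow h6C.le hw0.le]
          have e1 : (6*C)^(p-1) * (d (v z) * (-deriv v z)^(p-1)) ≤ (6*C)^(p-1) * (C * v z) :=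
            mul_le_mul_of_nonneg_left hdw (Real.rpow_nonneg h6C.le _)
          have e3 : L * v z ≤ d (v z) * h (v z) ^ (p - 1) := by rw [← hκval]; exact hκ
          have e4 : d (v z) * ((6*C)^(p-1) * (-deriv v z)^(p-1)) ≤
              d (v z) * h (v z) ^ (p - 1) := by
            calc d (v z) * ((6*C)^(p-1) * (-deriv v z)^(p-1))
                = (6*C)^(p-1) * (d (v z) * (-deriv v z)^(p-1)) := by ring
              _ ≤ (6*C)^(p-1) * (C * v z) := e1
              _ = L * v z := by rw [hLdef]; ring
              _ ≤ d (v z) * h (v z) ^ (p - 1) := e3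
          exact le_of_mul_le_mul_left e4 hdz
        have hfin : (6 * C) * (-deriv v z) ≤ h (v z) :=
          (Real.rpow_le_rpow_iff (mul_nonneg h6C.le hw0.le) hhv0.le hp1).mp hchain
        have : -deriv v z ≤ h (v z) / (6 * C) := by
          rw [le_div_iff₀ h6C]
          linarith
        linarith
    -- integrate
    have huIcc : uIcc zs t = Icc zs t := uIcc_of_le hzt
    have hcont_hv : ContinuousOn (fun z => h (v z)) (Icc zs t) := by
      intro z hz
      have h0 := hpos z hz
      have hv1 : v z < 1 := lt_of_le_of_lt (hle z hz) hδ1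
      have hN : Icc (0:ℝ) 1 ∈ 𝓝 (v z) := Icc_mem_nhds h0 hv1
      have hca : ContinuousAt h (v z) :=
        (hhc (v z) ⟨⟨h0.le, hv1.le⟩, hδΘ _ (hle z hz)⟩).continuousAt hN
      exact (hca.comp hvcont.continuousAt).continuousWithinAt
    have hcont_deriv : ContinuousOn (deriv v) (Icc zs t) := hderivcont.mono hSsub
    have hint1 : IntervalIntegrable (fun z => -(h (v z) / (6 * C))) volume zs t := by
      apply ContinuousOn.intervalIntegrable
      rw [huIcc]
      exact (hcont_hv.div_const _).neg
    have hint2 : IntervalIntegrable (deriv v) volume zs t := by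
      apply ContinuousOn.intervalIntegrable
      rw [huIcc]
      exact hcont_deriv
    have hFTC : ∫ y in zs..t, deriv v y = v t - v zs := by
      apply intervalIntegral.integral_deriv_eq_sub _ hint2
      intro x hx
      rw [huIcc] at hx
      exact hdiff x (hSsub hx)
    have hmono := intervalIntegral.integral_mono_on hzt hint1 hint2 hder
    have hJdef : (∫ z in zs..t, -(h (v z) / (6 * C)))
        = -((∫ z in zs..t, h (v z)) / (6 * C)) := by
      rw [intervalIntegral.integral_neg, intervalIntegral.integral_div]
    -- bound the integral of h ∘ v
    have hvtδ : v t ≤ δ := hle t ⟨hzt, le_rfl⟩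
    have hvt0 : 0 < v t := hpos t ⟨hzt, le_rfl⟩
    have hJle : (∫ z in zs..t, h (v z)) ≤ 2 * C * δ := by
      have hid := hiv zs t
      have hI : |∫ ξ in (v zs)..(v t), (c * g ξ - f ξ)| ≤ C * δ := by
        have hb := hIbound (v zs) (v t) (hvmem zs) (hvmem t)
        have habs : |v t - v zs| ≤ δ := by
          rw [hvzs, abs_of_nonpos (by linarith)]
          linarith
        calc |∫ ξ in (v zs)..(v t), (c * g ξ - f ξ)| ≤ C * |v t - v zs| := hb
          _ ≤ C * δ := mul_le_mul_of_nonneg_left habs hC0.le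
      have hΦtlow := hΦlow t
      have hvtC : C * v t ≤ C * δ := mul_le_mul_of_nonneg_left hvtδ hC0.le
      have habs2 := abs_le.mp hI
      linarith [hid, hΦzs]
    have hstep : -((2 * C * δ) / (6 * C)) ≤ v t - δ := by
      have e1 : (∫ z in zs..t, h (v z)) / (6 * C) ≤ (2 * C * δ) / (6 * C) := by
        gcongr
      rw [hJdef] at hmono
      rw [hFTC, hvzs] at hmono
      linarith
    have e2 : (2 * C * δ) / (6 * C) = δ / 3 := by
      field_simp
      ring
    rw [e2] at hstep
    linarith
  -- endgame
  set B : Set ℝ := {z | zs ≤ z ∧ v z = 0} with hB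
  rcases B.eq_empty_or_nonempty with hBe | hBne
  · have hposall : ∀ t, zs ≤ t → 2/3 * δ ≤ v t := by
      intro t ht
      apply hkey t ht
      intro z hz
      rcases (hvmem z).1.lt_or_eq with hlt0 | heq0
      · exact hlt0
      · exfalso
        exact (Set.eq_empty_iff_forall_notMem.mp hBe) z ⟨hz.1, heq0.symm⟩
    have hev : ∀ᶠ t in atTop, v t < 2/3 * δ :=
      hvtop.eventually (eventually_lt_nhds (by linarith))
    obtain ⟨t, ht1, ht2⟩ := (hev.and (eventually_ge_atTop zs)).exists
    linarith [hposall t ht2]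
  · have hBclosed : IsClosed B := by
      have : B = {z | zs ≤ z} ∩ {z | v z = 0} := rfl
      rw [this]
      exact (isClosed_le continuous_const continuous_id).inter
        (isClosed_eq hvcont continuous_const)
    have hBbdd : BddBelow B := ⟨zs, fun z hz => hz.1⟩
    set b := sInf B with hbdef
    have hbB : b ∈ B := hBclosed.csInf_mem hBne hBbdd
    have hvb : v b = 0 := hbB.2
    have hzsb : zs < b := by
      rcases eq_or_lt_of_le hbB.1 with he | hl
      · exfalso
        rw [← he] at hvb
        rw [hvzs] at hvb
        linarith
      · exact hl
    have hposmid : ∀ t, zs ≤ t → t < b → 2/3 * δ ≤ v t := by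
      intro t ht1 ht2
      apply hkey t ht1
      intro z hz
      rcases (hvmem z).1.lt_or_eq with hlt0 | heq0
      · exact hlt0
      · exfalso
        have hzB : z ∈ B := ⟨hz.1, heq0.symm⟩
        have := csInf_le hBbdd hzB
        rw [← hbdef] at this
        linarith [hz.2]
    have htend : Tendsto v (𝓝[<] b) (𝓝 (v b)) :=
      (hvcont.tendsto b).mono_left nhdsWithin_le_nhds
    have hev : ∀ᶠ z in 𝓝[<] b, 2/3 * δ ≤ v z :=
      Filter.eventually_of_mem (Ioo_mem_nhdsLT_of_mem ⟨hzsb, le_rfl⟩)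
        (fun z hz => hposmid z hz.1.le hz.2)
    have hge : 2/3 * δ ≤ v b := ge_of_tendsto htend hev
    rw [hvb] at hge
    linarith
end
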